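/- In the inclusive setup with a single bath, the reinitialization entropy production is nonnegative: σ̄ ≥ 0, i.e., the minimal work expended to reinitialize the system of interest is at least the maximal work extractable from the bath's relaxation. -/

import Mathlib

/-
The reinitialization entropy production is a relative entropy. Since F is a bijection,
H(P_τ) = H(p₀ ⊗ ρ₀) = H(p₀) + H(ρ₀), and unfolding Q̄ with B = -ln ρ₀ gives
σ̄ = H(p_τ) - H(P_τ) - Σ_v ρ_τ(v) ln ρ₀(v) = D(P_τ ‖ p_τ ⊗ ρ₀),
which is nonnegative by Gibbs' inequality.
-/

open scoped BigOperators

/-- Shannon entropy (natural log) of a distribution on a finite type. -/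
noncomputable def shannonH {U : Type*} [Fintype U] (p : U → ℝ) : ℝ :=
  -∑ u, p u * Real.log (p u)

/-- Kullback–Leibler divergence between two distributions on a finite type. -/
noncomputable def klDiv {U : Type*} [Fintype U] (p q : U → ℝ) : ℝ :=
  ∑ u, p u * Real.log (p u / q u)

open Finset Real

section Entropy

variable {α β : Type*} [Fintype α] [Fintype β]

theorem sub_le_mul_log_div {p q : ℝ} (hp : 0 ≤ p) (hq : 0 ≤ q) (hpq : 0 < p → 0 < q) :
    p - q ≤ p * log (p / q) := by
  rcases hp.eq_or_lt with rfl | hp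
  · simpa using hq
  have hq := hpq hp
  calc p - q = p * (1 - (p / q)⁻¹) := by field_simp
    _ ≤ p * log (p / q) :=
      mul_le_mul_of_nonneg_left (one_sub_inv_le_log_of_pos (div_pos hp hq)) hp.le

theorem klDiv_nonneg {p q : α → ℝ} (hp : ∀ a, 0 ≤ p a) (hq : ∀ a, 0 ≤ q a)
    (hpq : ∀ a, 0 < p a → 0 < q a) (hsum : ∑ a, q a ≤ ∑ a, p a) : 0 ≤ klDiv p q := by
  have h := sum_le_sum fun a (_ : a ∈ univ) => sub_le_mul_log_div (hp a) (hq a) (hpq a)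
  rw [sum_sub_distrib] at h
  unfold klDiv
  linarith

theorem shannonH_eq_sum_negMulLog (p : α → ℝ) : shannonH p = ∑ a, negMulLog (p a) := by
  simp only [shannonH, negMulLog, neg_mul, sum_neg_distrib]

theorem shannonH_comp_equiv (P : α → ℝ) (e : β ≃ α) :
    shannonH (fun b => P (e b)) = shannonH P := by
  simp only [shannonH_eq_sum_negMulLog]
  exact e.sum_comp fun a => negMulLog (P a)

theorem shannonH_prod {p : α → ℝ} {q : β → ℝ} (hp : ∑ a, p a = 1) (hq : ∑ b, q b = 1) :
    shannonH (fun x : α × β => p x.1 * q x.2) = shannonH p + shannonH q := by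
  simp only [shannonH_eq_sum_negMulLog, negMulLog_mul, Fintype.sum_prod_type, sum_add_distrib,
    ← mul_sum, ← sum_mul, hp, hq, one_mul]

theorem sum_mul_comp_fst (P : α × β → ℝ) (g : α → ℝ) :
    ∑ x, P x * g x.1 = ∑ a, (∑ b, P (a, b)) * g a := by
  simp only [Fintype.sum_prod_type, sum_mul]

theorem sum_mul_comp_snd (P : α × β → ℝ) (g : β → ℝ) :
    ∑ x, P x * g x.2 = ∑ b, (∑ a, P (a, b)) * g b := by
  simp only [Fintype.sum_prod_type_right, sum_mul]

theorem klDiv_prod_eq {P : α × β → ℝ} {p : α → ℝ} {q : β → ℝ}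
    (hsupp : ∀ x, P x ≠ 0 → p x.1 ≠ 0 ∧ q x.2 ≠ 0) :
    klDiv P (fun x => p x.1 * q x.2) =
      -shannonH P - ∑ a, (∑ b, P (a, b)) * log (p a) - ∑ b, (∑ a, P (a, b)) * log (q b) := by
  have hpoint : ∀ x, P x * log (P x / (p x.1 * q x.2)) =
      P x * log (P x) - P x * log (p x.1) - P x * log (q x.2) := by
    intro x
    by_cases hx : P x = 0
    · simp [hx]
    obtain ⟨hp, hq⟩ := hsupp x hx
    rw [log_div hx (mul_ne_zero hp hq), log_mul hp hq]
    ring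
  rw [klDiv, sum_congr rfl fun x _ => hpoint x, sum_sub_distrib, sum_sub_distrib,
    sum_mul_comp_fst P fun a => log (p a), sum_mul_comp_snd P fun b => log (q b), shannonH,
    neg_neg]

end Entropy

/-- In the inclusive setup with a single bath, the reinitialization entropy
production is nonnegative: σ̄ ≥ 0. -/
theorem rep_nonneg
    {U V : Type*} [Fintype U] [Fintype V]
    (p0 : U → ℝ) (ρ0 : V → ℝ)
    (hp0 : ∀ u, 0 ≤ p0 u) (hp0sum : ∑ u, p0 u = 1)
    (hρ0 : ∀ v, 0 < ρ0 v) (hρ0sum : ∑ v, ρ0 v = 1)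
    (F : U × V ≃ U × V)
    (Pτ : U × V → ℝ)
    (hPτ : ∀ x, Pτ x = p0 (F.symm x).1 * ρ0 (F.symm x).2)
    (pτ : U → ℝ) (hpτ : ∀ u, pτ u = ∑ v, Pτ (u, v))
    (ρτ : V → ℝ) (hρτ : ∀ v, ρτ v = ∑ u, Pτ (u, v))
    (B : V → ℝ) (hB : ∀ v, B v = -Real.log (ρ0 v))
    (Qbar : ℝ) (hQbar : Qbar = ∑ v, ρ0 v * B v - ∑ v, ρτ v * B v)
    (σbar : ℝ) (hσbar : σbar = (shannonH pτ - shannonH p0) - Qbar) :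
    0 ≤ σbar := by
  have hPτ_nonneg : ∀ x, 0 ≤ Pτ x := fun x => (hPτ x).symm ▸ mul_nonneg (hp0 _) (hρ0 _).le
  have hpτ_nonneg : ∀ u, 0 ≤ pτ u := fun u => (hpτ u).symm ▸ sum_nonneg fun v _ => hPτ_nonneg _
  have hpτ_pos : ∀ x, 0 < Pτ x → 0 < pτ x.1 := fun x hx =>
    hx.trans_le <| (hpτ x.1).symm ▸ single_le_sum (fun v _ => hPτ_nonneg (x.1, v)) (mem_univ x.2)
  have hentropy : shannonH Pτ = shannonH p0 + shannonH ρ0 := by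
    rw [funext hPτ, shannonH_comp_equiv (fun y => p0 y.1 * ρ0 y.2) F.symm,
      shannonH_prod hp0sum hρ0sum]
  have hmass : ∑ x : U × V, pτ x.1 * ρ0 x.2 = ∑ x, Pτ x := by
    rw [Fintype.sum_prod_type, ← sum_mul_sum, hρ0sum, mul_one, Fintype.sum_prod_type]
    exact sum_congr rfl fun u _ => hpτ u
  have hσ_eq_kl : σbar = klDiv Pτ (fun x => pτ x.1 * ρ0 x.2) := by
    rw [klDiv_prod_eq fun x hx => ⟨(hpτ_pos x ((hPτ_nonneg x).lt_of_ne' hx)).ne', (hρ0 x.2).ne'⟩,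
      hentropy, hσbar, hQbar]
    simp only [hB, ← hpτ, ← hρτ, shannonH, mul_neg, sum_neg_distrib]
    ring
  rw [hσ_eq_kl]
  exact klDiv_nonneg hPτ_nonneg (fun x => mul_nonneg (hpτ_nonneg _) (hρ0 _).le)
    (fun x hx => mul_pos (hpτ_pos x hx) (hρ0 _)) hmass.le
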